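/- Let (s_1, s_2) be a Cuntz family of order 2 on a complex Hilbert space H with a cyclic unit vector Ω satisfying s_1 s_2 Ω = Ω and ⟨Ω, s_2 Ω⟩ = 0 (so the representation is P(12)). Define t_1 := s_1 s_2 s_1^* + s_1 s_1 s_2^* and t_2 := s_2 (the images of the generators under the permutative endomorphism ψ_{(12)}); then (t_1, t_2) is again a Cuntz family. Let V_1 := the closed linear span of {s_K s_L^* Ω : |K| = |L|} and V_2 := the closed linear span of {s_K s_L^* s_2 Ω : |K| = |L|}. Then: V_1 is the orthogonal direct sum of W_1 := the closed linear span of {t_K t_L^* Ω : |K| = |L|} and W_2 := the closed linear span of {t_K t_L^* s_2 s_2 Ω : |K| = |L|}, where Ω satisfies the P[(1,1,2,2)]-condition with respect to (t_1, t_2) and s_2 s_2 Ω satisfies the P[(2,2,1,1)]-condition with respect to (t_1, t_2); and V_2 is the orthogonal direct sum of the closed linear span of {t_K t_L^* s_2 Ω : |K| = |L|} and the closed linear span of {t_K t_L^* s_1 Ω : |K| = |L|}, where s_2 Ω satisfies the P[(2,1,1,2)]-condition and s_1 Ω satisfies the P[(1,2,2,1)]-condition with respect to (t_1, t_2). That is,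 P[12]∘ψ_{(12)} = P[1122] ⊕ P[2211] and P[21]∘ψ_{(12)} = P[2112] ⊕ P[1221]. -/

import Mathlib

noncomputable section

def IsCuntzFamily {H : Type*} [NormedAddCommGroup H] [InnerProductSpace ℂ H]
    [CompleteSpace H] {N : ℕ} (s : Fin N → H →L[ℂ] H) : Prop :=
  (∀ i j, star (s i) * s j = if i = j then (1 : H →L[ℂ] H) else 0) ∧
  ∑ i, s i * star (s i) = 1

def wordOp {H : Type*} [NormedAddCommGroup H] [InnerProductSpace ℂ H]
    [CompleteSpace H] {N : ℕ} (s : Fin N → H →L[ℂ] H) : List (Fin N) → H →L[ℂ] H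
  | [] => 1
  | j :: J => s j * wordOp s J

/-- Closed linear span of `{s_K s_L^* v : |K| = |L|}`. -/
def UHFSpan {H : Type*} [NormedAddCommGroup H] [InnerProductSpace ℂ H]
    [CompleteSpace H] {N : ℕ} (s : Fin N → H →L[ℂ] H) (v : H) : Submodule ℂ H :=
  (Submodule.span ℂ {x : H | ∃ K L : List (Fin N), K.length = L.length ∧
      x = (wordOp s K * star (wordOp s L)) v}).topologicalClosure

/-- `Ω` is UHF-cyclic: the closed span of `{s_K s_L^* Ω : |K| = |L|}` is the whole space. -/
def IsUHFCyclic {H : Type*} [NormedAddCommGroup H] [InnerProductSpace ℂ H]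
    [CompleteSpace H] {N : ℕ} (s : Fin N → H →L[ℂ] H) (Ω : H) : Prop :=
  UHFSpan s Ω = ⊤

/-- The `P[w]`-condition for an infinite word `w` (0-indexed). -/
def PCond {H : Type*} [NormedAddCommGroup H] [InnerProductSpace ℂ H]
    [CompleteSpace H] {N : ℕ} (s : Fin N → H →L[ℂ] H) (w : ℕ → Fin N) (Ω : H) : Prop :=
  ∀ n : ℕ, (wordOp s (List.ofFn fun k : Fin n => w k) *
      star (wordOp s (List.ofFn fun k : Fin n => w k))) Ω = Ω

def IsCyclicVec {H : Type*} [NormedAddCommGroup H] [InnerProductSpace ℂ H]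
    [CompleteSpace H] {N : ℕ} (s : Fin N → H →L[ℂ] H) (Ω : H) : Prop :=
  ∀ W : Submodule ℂ H, IsClosed (W : Set H) → Ω ∈ W →
    (∀ i, ∀ x ∈ W, s i x ∈ W ∧ star (s i) x ∈ W) → W = ⊤

/-!
Letters are 0-indexed: `s 0`, `s 1` are the paper's `s₁`, `s₂`.

With the flip unitary `U = s₁s₂* + s₂s₁*` we have `t₁ = s₁U` and `t₂ = s₂`, hence
`t_i s_j = s_i s_{σ_i j}` (`σ₁ = (12)`, `σ₂ = 1`): a `t`-word followed by one `s`-letter is an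
`s`-word with one more letter, and conversely. The vectors `c = (Ω, s₁Ω, s₂s₂Ω, s₂Ω, …)` satisfy
`c_k = t_{w_k} c_{k+1}` for `w = (1122)^∞`, and `d = (Ω, s₂Ω, …)` satisfies `d_k = s_{w'_k} d_{k+1}`
for `w' = (12)^∞`. Along such a sequence the closed span of `{u_K u_L^* c_a : |K| = |L|}` is the
closed span of `{u_K c_{a+|K|}}`. Comparing these spans through the exchange relation gives
`W(c_a) ⊆ V(d_a) ⊆ W(c_a) + W(c_{a+2})`, with `V`, `W` the spans for `s`, `t`; the last sum is
orthogonal, hence closed, because `c_k` and `c_{k+2}` lie in the ranges of different isometries.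
-/

section Branching

open Submodule
open scoped InnerProductSpace

theorem Submodule.IsOrtho.topologicalClosure {𝕜 E : Type*} [RCLike 𝕜] [NormedAddCommGroup E]
    [InnerProductSpace 𝕜 E] {U V : Submodule 𝕜 E} (h : U ⟂ V) :
    U.topologicalClosure ⟂ V.topologicalClosure := by
  rw [isOrtho_iff_le, orthogonal_closure]
  exact topologicalClosure_minimal _ h.le (isClosed_orthogonal V)

theorem Submodule.isClosed_sup_of_isOrtho {𝕜 E : Type*} [RCLike 𝕜] [NormedAddCommGroup E]
    [InnerProductSpace 𝕜 E] [CompleteSpace E] {U V : Submodule 𝕜 E} (hU : IsClosed (U : Set E))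
    (hV : IsClosed (V : Set E)) (h : U ⟂ V) : IsClosed ((U ⊔ V : Submodule 𝕜 E) : Set E) := by
  have : CompleteSpace U := hU.completeSpace_coe
  have : CompleteSpace V := hV.completeSpace_coe
  -- `X` is the closure of `U ⊔ V`; splitting it along `U`, then along `V`, gives `X = U ⊔ V`.
  set X := (U ⊔ V)ᗮᗮ
  have hVX : Uᗮ ⊓ X = V := by
    have := sup_orthogonal_inf_of_hasOrthogonalProjection
      (le_inf h.ge (le_sup_right.trans (le_orthogonal_orthogonal _)) : V ≤ Uᗮ ⊓ X)
    rwa [← inf_assoc, inf_comm Vᗮ, inf_orthogonal, inf_orthogonal_eq_bot, sup_bot_eq,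
      eq_comm] at this
  have hUX : U ⊔ Uᗮ ⊓ X = X :=
    sup_orthogonal_inf_of_hasOrthogonalProjection (le_sup_left.trans (le_orthogonal_orthogonal _))
  rw [← hVX, hUX]
  exact isClosed_orthogonal _

variable {H : Type*} [NormedAddCommGroup H] [InnerProductSpace ℂ H]

section Cuntz

variable [CompleteSpace H] {N : ℕ}

@[simp] theorem wordOp_nil (u : Fin N → H →L[ℂ] H) : wordOp u [] = 1 := rfl

@[simp] theorem wordOp_cons (u : Fin N → H →L[ℂ] H) (j : Fin N) (J : List (Fin N)) :
    wordOp u (j :: J) = u j * wordOp u J := rfl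

theorem wordOp_append (u : Fin N → H →L[ℂ] H) (K L : List (Fin N)) :
    wordOp u (K ++ L) = wordOp u K * wordOp u L := by
  induction K with
  | nil => simp
  | cons j K ih => simp [ih, mul_assoc]

namespace IsCuntzFamily

variable {u : Fin N → H →L[ℂ] H} (hu : IsCuntzFamily u)
include hu

theorem star_mul_of_ne {i j : Fin N} (h : i ≠ j) : star (u i) * u j = 0 := by
  simpa [h] using hu.1 i j

theorem star_wordOp_mul_wordOp_of_length_eq {K L : List (Fin N)} (hKL : K.length = L.length) :
    star (wordOp u K) * wordOp u L = if K = L then 1 else 0 := by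
  induction K generalizing L with
  | nil => simp_all [List.length_eq_zero_iff.mp hKL.symm]
  | cons i K ih =>
    obtain ⟨j, L, rfl⟩ := List.exists_cons_of_length_eq_add_one hKL.symm
    rw [wordOp_cons, wordOp_cons, star_mul, mul_assoc, ← mul_assoc (star (u i)), hu.1]
    by_cases hij : i = j
    · subst hij
      simp [ih (Nat.succ_injective hKL)]
    · simp [hij]

theorem star_wordOp_mul_wordOp (K : List (Fin N)) : star (wordOp u K) * wordOp u K = 1 := by
  simpa using hu.star_wordOp_mul_wordOp_of_length_eq (rfl : K.length = K.length)

theorem inner_wordOp_apply_eq_zero {K L : List (Fin N)} (hKL : K.length = L.length) {x y : H}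
    (hxy : ⟪x, y⟫_ℂ = 0) : ⟪wordOp u K x, wordOp u L y⟫_ℂ = 0 := by
  rw [← ContinuousLinearMap.adjoint_inner_right, ← ContinuousLinearMap.star_eq_adjoint,
    ← mul_apply_eq_comp, hu.star_wordOp_mul_wordOp_of_length_eq hKL]
  split_ifs <;> simp [hxy]

theorem inner_apply_apply_of_ne {i j : Fin N} (h : i ≠ j) (x y : H) : ⟪u i x, u j y⟫_ℂ = 0 := by
  rw [← ContinuousLinearMap.adjoint_inner_right, ← ContinuousLinearMap.star_eq_adjoint,
    ← mul_apply_eq_comp, hu.star_mul_of_ne h]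
  simp

end IsCuntzFamily

section Permutative

variable {u : Fin N → H →L[ℂ] H}

def permOp (u : Fin N → H →L[ℂ] H) (σ : Equiv.Perm (Fin N)) : H →L[ℂ] H :=
  ∑ i, u (σ i) * star (u i)

theorem star_permOp (u : Fin N → H →L[ℂ] H) (σ : Equiv.Perm (Fin N)) :
    star (permOp u σ) = ∑ i, u i * star (u (σ i)) := by
  simp [permOp, star_sum]

variable (hu : IsCuntzFamily u) (σ : Equiv.Perm (Fin N))
include hu

theorem IsCuntzFamily.permOp_one : permOp u 1 = 1 := by
  simpa [permOp] using hu.2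

theorem IsCuntzFamily.permOp_mul (j : Fin N) : permOp u σ * u j = u (σ j) := by
  simp [permOp, Finset.sum_mul, mul_assoc, hu.1]

theorem IsCuntzFamily.star_permOp_mul (j : Fin N) : star (permOp u σ) * u (σ j) = u j := by
  simp [star_permOp, Finset.sum_mul, mul_assoc, hu.1]

theorem IsCuntzFamily.star_permOp_mul_permOp : star (permOp u σ) * permOp u σ = 1 := by
  nth_rw 2 [permOp]
  simp_rw [Finset.mul_sum, ← mul_assoc, hu.star_permOp_mul]
  exact hu.2

theorem IsCuntzFamily.permOp_mul_star_permOp : permOp u σ * star (permOp u σ) = 1 := by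
  rw [star_permOp]
  simp_rw [Finset.mul_sum, ← mul_assoc, hu.permOp_mul]
  rw [Equiv.sum_comp σ fun i => u i * star (u i)]
  exact hu.2

end Permutative

def twist (u : Fin N → H →L[ℂ] H) (τ : Fin N → Equiv.Perm (Fin N)) : Fin N → H →L[ℂ] H :=
  fun i => u i * permOp u (τ i)

namespace IsCuntzFamily

variable {u : Fin N → H →L[ℂ] H} (hu : IsCuntzFamily u) (τ : Fin N → Equiv.Perm (Fin N))
include hu

theorem twist_mul (i j : Fin N) : twist u τ i * u j = u i * u (τ i j) := by
  rw [twist, mul_assoc, hu.permOp_mul]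

protected theorem twist : IsCuntzFamily (twist u τ) := by
  refine ⟨fun i j => ?_, ?_⟩
  · rw [twist, twist, star_mul, mul_assoc, ← mul_assoc (star (u i)), hu.1]
    split_ifs with hij
    · subst hij
      rw [one_mul, hu.star_permOp_mul_permOp]
    · rw [zero_mul, mul_zero]
  · simp_rw [twist, star_mul, mul_assoc, ← mul_assoc (permOp u _), hu.permOp_mul_star_permOp,
      one_mul]
    exact hu.2

end IsCuntzFamily

def wordSegment (w : ℕ → Fin N) (a n : ℕ) : List (Fin N) :=
  List.ofFn fun k : Fin n => w (a + k)

@[simp] theorem wordSegment_length (w : ℕ → Fin N) (a n : ℕ) :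
    (wordSegment w a n).length = n := by
  simp [wordSegment]

theorem wordSegment_succ (w : ℕ → Fin N) (a n : ℕ) :
    wordSegment w a (n + 1) = w a :: wordSegment w (a + 1) n := by
  simp only [wordSegment, List.ofFn_succ, Fin.val_zero, add_zero, Fin.val_succ]
  congr 2
  ext k
  rw [add_comm (k : ℕ), add_assoc]

/-- `c 0` satisfies the `P[w]`-condition, and `c k = u_{w (k-1)}^* ⋯ u_{w 0}^* (c 0)` is its
`k`-th tail. -/
def IsWordOrbit (u : Fin N → H →L[ℂ] H) (w : ℕ → Fin N) (c : ℕ → H) : Prop :=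
  ∀ k, u (w k) (c (k + 1)) = c k

namespace IsWordOrbit

variable {u : Fin N → H →L[ℂ] H} {w : ℕ → Fin N} {c : ℕ → H}

theorem wordOp_wordSegment_apply (hc : IsWordOrbit u w c) (a n : ℕ) :
    wordOp u (wordSegment w a n) (c (a + n)) = c a := by
  induction n generalizing a with
  | zero => simp [wordSegment]
  | succ n ih =>
    rw [wordSegment_succ, wordOp_cons, mul_apply_eq_comp, ← add_assoc, add_right_comm, ih, hc]

theorem wordOp_apply_eq_append (hc : IsWordOrbit u w c) (K : List (Fin N)) (b m : ℕ) :
    wordOp u K (c b) = wordOp u (K ++ wordSegment w b m) (c (b + m)) := by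
  rw [wordOp_append, mul_apply_eq_comp, hc.wordOp_wordSegment_apply]

variable (hc : IsWordOrbit u w c) (hu : IsCuntzFamily u)
include hc hu

theorem star_wordOp_wordSegment_apply (a n : ℕ) :
    star (wordOp u (wordSegment w a n)) (c a) = c (a + n) := by
  rw [← hc.wordOp_wordSegment_apply a n, ← mul_apply_eq_comp, hu.star_wordOp_mul_wordOp,
    one_apply_eq_self]

theorem star_wordOp_apply (L : List (Fin N)) (a : ℕ) :
    star (wordOp u L) (c a) = if L = wordSegment w a L.length then c (a + L.length) else 0 := by
  rw [← hc.wordOp_wordSegment_apply a L.length, ← mul_apply_eq_comp,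
    hu.star_wordOp_mul_wordOp_of_length_eq (wordSegment_length w a _).symm]
  split_ifs <;> simp

theorem pCond (a : ℕ) : PCond u (fun k => w (a + k)) (c a) := fun n => by
  rw [mul_apply_eq_comp]
  exact (congrArg _ (hc.star_wordOp_wordSegment_apply hu a n)).trans
    (hc.wordOp_wordSegment_apply a n)

theorem wordOp_mem_UHFSpan (a : ℕ) (K : List (Fin N)) :
    wordOp u K (c (a + K.length)) ∈ UHFSpan u (c a) := by
  rw [← hc.star_wordOp_wordSegment_apply hu, ← mul_apply_eq_comp]
  exact le_topologicalClosure _ (subset_span ⟨K, _, (wordSegment_length w a _).symm, rfl⟩)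

theorem UHFSpan_eq (a : ℕ) : UHFSpan u (c a) =
    (span ℂ (Set.range fun K => wordOp u K (c (a + K.length)))).topologicalClosure := by
  refine le_antisymm (topologicalClosure_mono (span_le.2 ?_))
    (topologicalClosure_minimal _ (span_le.2 ?_) (isClosed_topologicalClosure _))
  · rintro _ ⟨K, L, hKL, rfl⟩
    rw [SetLike.mem_coe, mul_apply_eq_comp, hc.star_wordOp_apply hu, ← hKL]
    split_ifs
    · exact subset_span ⟨K, rfl⟩
    · simp
  · rintro _ ⟨K, rfl⟩
    exact hc.wordOp_mem_UHFSpan hu a K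

theorem UHFSpan_isOrtho {a b : ℕ} (h : ∀ k, ⟪c (a + k), c (b + k)⟫_ℂ = 0) :
    UHFSpan u (c a) ⟂ UHFSpan u (c b) := by
  rw [hc.UHFSpan_eq hu, hc.UHFSpan_eq hu]
  refine IsOrtho.topologicalClosure (isOrtho_span.2 ?_)
  rintro _ ⟨K, rfl⟩ _ ⟨L, rfl⟩
  dsimp only
  rw [hc.wordOp_apply_eq_append K _ L.length, hc.wordOp_apply_eq_append L _ K.length]
  refine hu.inner_wordOp_apply_eq_zero (by simp [add_comm]) ?_
  convert h (K.length + L.length) using 3 <;> ring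

end IsWordOrbit

section Exchange

variable {u v : Fin N → H →L[ℂ] H}

theorem exists_wordOp_mul_eq (hx : ∀ i j, ∃ a b, u i * v j = v a * v b) (K : List (Fin N))
    (j : Fin N) : ∃ a D, wordOp u K * v j = v a * wordOp v D ∧ D.length = K.length := by
  induction K with
  | nil => exact ⟨j, [], by simp⟩
  | cons i K ih =>
    obtain ⟨a, D, hK, hD⟩ := ih
    obtain ⟨a', b', hi⟩ := hx i a
    refine ⟨a', b' :: D, ?_, by simp [hD]⟩
    rw [wordOp_cons, mul_assoc, hK, ← mul_assoc, hi, wordOp_cons, mul_assoc]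

theorem exists_mul_wordOp_eq (hy : ∀ a b, ∃ i j, v a * v b = u i * v j) (D : List (Fin N))
    (a : Fin N) : ∃ K j, v a * wordOp v D = wordOp u K * v j ∧ K.length = D.length := by
  induction D generalizing a with
  | nil => exact ⟨[], a, by simp⟩
  | cons b D ih =>
    obtain ⟨i, j, hab⟩ := hy a b
    obtain ⟨K, j', hD, hK⟩ := ih j
    refine ⟨i :: K, j', ?_, by simp [hK]⟩
    rw [wordOp_cons, ← mul_assoc, hab, mul_assoc, hD, wordOp_cons, mul_assoc]

variable {w w' : ℕ → Fin N} {c d : ℕ → H} (hu : IsCuntzFamily u) (hv : IsCuntzFamily v)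
  (hc : IsWordOrbit u w c) (hd : IsWordOrbit v w' d)
include hu hv hc hd

theorem UHFSpan_le_of_exchange (hx : ∀ i j, ∃ a b, u i * v j = v a * v b)
    (hcd : ∀ k, ∃ j, c k = v j (d (k + 1))) (a : ℕ) : UHFSpan u (c a) ≤ UHFSpan v (d a) := by
  rw [hc.UHFSpan_eq hu]
  refine topologicalClosure_minimal _ (span_le.2 ?_) (isClosed_topologicalClosure _)
  rintro _ ⟨K, rfl⟩
  obtain ⟨j, hj⟩ := hcd (a + K.length)
  obtain ⟨b, D, hKD, hD⟩ := exists_wordOp_mul_eq hx K j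
  have : wordOp u K (c (a + K.length)) = wordOp v (b :: D) (d (a + (b :: D).length)) := by
    rw [hj, ← mul_apply_eq_comp, hKD, wordOp_cons, List.length_cons, hD, add_assoc]
  simp only [SetLike.mem_coe, this]
  exact hd.wordOp_mem_UHFSpan hv a _

theorem UHFSpan_le_sup_of_exchange (hy : ∀ a b, ∃ i j, v a * v b = u i * v j) {q : ℕ}
    (hdc : ∀ j k, v j (d (k + 1)) = c k ∨ v j (d (k + 1)) = c (k + q)) {a : ℕ}
    (horth : ∀ k, ⟪c (a + k), c (a + q + k)⟫_ℂ = 0) :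
    UHFSpan v (d a) ≤ UHFSpan u (c a) ⊔ UHFSpan u (c (a + q)) := by
  have hmem : ∀ K j, wordOp u K (v j (d (a + K.length + 1))) ∈
      UHFSpan u (c a) ⊔ UHFSpan u (c (a + q)) := by
    intro K j
    rcases hdc j (a + K.length) with h | h <;> rw [h]
    · exact mem_sup_left (hc.wordOp_mem_UHFSpan hu a K)
    · rw [add_right_comm]
      exact mem_sup_right (hc.wordOp_mem_UHFSpan hu (a + q) K)
  rw [hd.UHFSpan_eq hv]
  refine topologicalClosure_minimal _ (span_le.2 ?_) (isClosed_sup_of_isOrtho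
    (isClosed_topologicalClosure _) (isClosed_topologicalClosure _) (hc.UHFSpan_isOrtho hu horth))
  rintro _ ⟨_ | ⟨b, D⟩, rfl⟩
  · simpa [← hd a] using hmem [] (w' a)
  · obtain ⟨K, j, hDK, hK⟩ := exists_mul_wordOp_eq hy D b
    have : wordOp v (b :: D) (d (a + (b :: D).length)) =
        wordOp u K (v j (d (a + K.length + 1))) := by
      rw [wordOp_cons, hDK, mul_apply_eq_comp, List.length_cons, hK, add_assoc]
    simp only [SetLike.mem_coe, this]
    exact hmem K j

end Exchange

end Cuntz

section Psi12

open Fin.NatCast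

/-- `twist s psi12Perm` is the image of `s` under the permutative endomorphism `ψ_{(12)}`. -/
def psi12Perm : Fin 2 → Equiv.Perm (Fin 2) := ![Equiv.swap 0 1, 1]

def tLetter (k : ℕ) : Fin 2 := ![0, 0, 1, 1] (k : Fin 4)

def sLetter (k : ℕ) : Fin 2 := ![0, 1, 0, 1] (k : Fin 4)

variable {s : Fin 2 → H →L[ℂ] H} {Ω : H}

variable (s Ω) in
def tOrbit (k : ℕ) : H := ![Ω, s 0 Ω, (s 1 * s 1) Ω, s 1 Ω] (k : Fin 4)

variable (s Ω) in
def sOrbit (k : ℕ) : H := ![Ω, s 1 Ω, Ω, s 1 Ω] (k : Fin 4)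

@[simp] theorem tOrbit_zero : tOrbit s Ω 0 = Ω := by simp [tOrbit]
@[simp] theorem tOrbit_one : tOrbit s Ω 1 = s 0 Ω := by simp [tOrbit]
@[simp] theorem tOrbit_two : tOrbit s Ω 2 = (s 1 * s 1) Ω := by simp [tOrbit]
@[simp] theorem tOrbit_three : tOrbit s Ω 3 = s 1 Ω := by simp [tOrbit]
@[simp] theorem sOrbit_zero : sOrbit s Ω 0 = Ω := by simp [sOrbit]
@[simp] theorem sOrbit_one : sOrbit s Ω 1 = s 1 Ω := by simp [sOrbit]
@[simp] theorem sOrbit_two : sOrbit s Ω 2 = Ω := by simp [sOrbit]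

theorem tLetter_add_two_ne (k : ℕ) : tLetter (k + 2) ≠ tLetter k := by
  simp only [tLetter, Nat.cast_add]
  generalize (k : Fin 4) = i
  fin_cases i <;> decide

section Fix

variable (hfix : s 0 (s 1 Ω) = Ω)
include hfix

theorem isWordOrbit_sOrbit : IsWordOrbit s sLetter (sOrbit s Ω) := by
  intro k
  simp only [sLetter, sOrbit, Nat.cast_add, Nat.cast_one]
  generalize (k : Fin 4) = i
  fin_cases i <;> simp [hfix]

theorem tOrbit_eq_apply_sOrbit (k : ℕ) : tOrbit s Ω k = s (tLetter k) (sOrbit s Ω (k + 1)) := by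
  simp only [tLetter, sOrbit, tOrbit, Nat.cast_add, Nat.cast_one]
  generalize (k : Fin 4) = i
  fin_cases i <;> simp [hfix]

theorem apply_sOrbit_eq_tOrbit (j : Fin 2) (k : ℕ) :
    s j (sOrbit s Ω (k + 1)) = tOrbit s Ω k ∨ s j (sOrbit s Ω (k + 1)) = tOrbit s Ω (k + 2) := by
  simp only [sOrbit, tOrbit, Nat.cast_add, Nat.cast_one]
  generalize (k : Fin 4) = i
  fin_cases i <;> fin_cases j <;> simp [hfix]

variable [CompleteSpace H] (hs : IsCuntzFamily s)
include hs

theorem isWordOrbit_tOrbit : IsWordOrbit (twist s psi12Perm) tLetter (tOrbit s Ω) := by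
  intro k
  rw [tOrbit_eq_apply_sOrbit hfix (k + 1), ← mul_apply_eq_comp, hs.twist_mul]
  simp only [tLetter, sOrbit, tOrbit, psi12Perm, Nat.cast_add, Nat.cast_one]
  generalize (k : Fin 4) = i
  fin_cases i <;> simp [hfix]

theorem inner_tOrbit_add_tOrbit_add_two (a k : ℕ) :
    ⟪tOrbit s Ω (a + k), tOrbit s Ω (a + 2 + k)⟫_ℂ = 0 := by
  rw [add_right_comm, tOrbit_eq_apply_sOrbit hfix, tOrbit_eq_apply_sOrbit hfix]
  exact hs.inner_apply_apply_of_ne (tLetter_add_two_ne _).symm _ _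

theorem UHFSpan_tOrbit_isOrtho (a : ℕ) :
    UHFSpan (twist s psi12Perm) (tOrbit s Ω a) ⟂ UHFSpan (twist s psi12Perm) (tOrbit s Ω (a + 2)) :=
  (isWordOrbit_tOrbit hfix hs).UHFSpan_isOrtho (hs.twist _)
    (inner_tOrbit_add_tOrbit_add_two hfix hs a)

theorem UHFSpan_tOrbit_le (a : ℕ) :
    UHFSpan (twist s psi12Perm) (tOrbit s Ω a) ≤ UHFSpan s (sOrbit s Ω a) :=
  UHFSpan_le_of_exchange (hs.twist _) hs (isWordOrbit_tOrbit hfix hs) (isWordOrbit_sOrbit hfix)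
    (fun i j => ⟨i, _, hs.twist_mul _ i j⟩) (fun k => ⟨_, tOrbit_eq_apply_sOrbit hfix k⟩) a

theorem UHFSpan_sOrbit_le_sup (a : ℕ) : UHFSpan s (sOrbit s Ω a) ≤
    UHFSpan (twist s psi12Perm) (tOrbit s Ω a) ⊔ UHFSpan (twist s psi12Perm) (tOrbit s Ω (a + 2)) :=
  UHFSpan_le_sup_of_exchange (hs.twist _) hs (isWordOrbit_tOrbit hfix hs) (isWordOrbit_sOrbit hfix)
    (fun a b => ⟨a, (psi12Perm a).symm b, by rw [hs.twist_mul, Equiv.apply_symm_apply]⟩)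
    (apply_sOrbit_eq_tOrbit hfix) (inner_tOrbit_add_tOrbit_add_two hfix hs a)

theorem pCond_tOrbit (r : ℕ) (f : Fin 4 → Fin 2) (hf : ∀ i, f i = ![0, 0, 1, 1] (r + i)) :
    PCond (twist s psi12Perm) (fun n => f ⟨n % 4, Nat.mod_lt _ (by norm_num)⟩) (tOrbit s Ω r) := by
  convert (isWordOrbit_tOrbit hfix hs).pCond (hs.twist _) r using 1
  funext n
  rw [hf, tLetter, Nat.cast_add]
  rfl

end Fix

variable [CompleteSpace H]

theorem twist_psi12Perm_zero :
    twist s psi12Perm 0 = s 0 * s 1 * star (s 0) + s 0 * s 0 * star (s 1) := by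
  simp [twist, permOp, psi12Perm, mul_add, mul_assoc]

theorem twist_psi12Perm_one (hs : IsCuntzFamily s) : twist s psi12Perm 1 = s 1 := by
  simp [twist, psi12Perm, hs.permOp_one]

end Psi12

end Branching

theorem P12_branching_psi12
    {H : Type*} [NormedAddCommGroup H] [InnerProductSpace ℂ H] [CompleteSpace H]
    (s : Fin 2 → H →L[ℂ] H) (hs : IsCuntzFamily s)
    (Ω : H)
    (hfix : (s 0 * s 1) Ω = Ω)
    (t : Fin 2 → H →L[ℂ] H)
    (ht0 : t 0 = s 0 * s 1 * star (s 0) + s 0 * s 0 * star (s 1))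
    (ht1 : t 1 = s 1) :
    -- `(t_1, t_2)` is again a Cuntz family
    IsCuntzFamily t
    -- `V_1 = W_1 ⊕ W_2`
    ∧ (∀ x ∈ UHFSpan t Ω, ∀ y ∈ UHFSpan t ((s 1 * s 1) Ω), (inner ℂ x y : ℂ) = 0)
    ∧ UHFSpan s Ω = UHFSpan t Ω ⊔ UHFSpan t ((s 1 * s 1) Ω)
    -- `Ω` satisfies `P[(1,1,2,2)]` and `s_2 s_2 Ω` satisfies `P[(2,2,1,1)]` w.r.t. `t`
    ∧ PCond t (fun n => (![0, 0, 1, 1] : Fin 4 → Fin 2) ⟨n % 4, by omega⟩) Ω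
    ∧ PCond t (fun n => (![1, 1, 0, 0] : Fin 4 → Fin 2) ⟨n % 4, by omega⟩) ((s 1 * s 1) Ω)
    -- `V_2` decomposes similarly
    ∧ (∀ x ∈ UHFSpan t (s 1 Ω), ∀ y ∈ UHFSpan t (s 0 Ω), (inner ℂ x y : ℂ) = 0)
    ∧ UHFSpan s (s 1 Ω) = UHFSpan t (s 1 Ω) ⊔ UHFSpan t (s 0 Ω)
    -- `s_2 Ω` satisfies `P[(2,1,1,2)]` and `s_1 Ω` satisfies `P[(1,2,2,1)]` w.r.t. `t`
    ∧ PCond t (fun n => (![1, 0, 0, 1] : Fin 4 → Fin 2) ⟨n % 4, by omega⟩) (s 1 Ω)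
    ∧ PCond t (fun n => (![0, 1, 1, 0] : Fin 4 → Fin 2) ⟨n % 4, by omega⟩) (s 0 Ω) := by
  replace hfix : s 0 (s 1 Ω) = Ω := hfix
  obtain rfl : t = twist s psi12Perm :=
    funext (Fin.forall_fin_two.2 ⟨ht0.trans twist_psi12Perm_zero.symm,
      ht1.trans (twist_psi12Perm_one hs).symm⟩)
  have hW := UHFSpan_tOrbit_le hfix hs
  have hV := UHFSpan_sOrbit_le_sup hfix hs
  refine ⟨hs.twist _, ?_, ?_, ?_, ?_, ?_, ?_, ?_, ?_⟩
  · simpa [← Submodule.isOrtho_iff_inner_eq] using UHFSpan_tOrbit_isOrtho hfix hs 0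
  · simpa using le_antisymm (hV 0) (sup_le (hW 0) (hW 2))
  · simpa using pCond_tOrbit hfix hs 0 ![0, 0, 1, 1] (by decide)
  · simpa using pCond_tOrbit hfix hs 2 ![1, 1, 0, 0] (by decide)
  · simpa [← Submodule.isOrtho_iff_inner_eq] using (UHFSpan_tOrbit_isOrtho hfix hs 1).symm
  · simpa [sup_comm] using le_antisymm (hV 1) (sup_le (hW 1) (hW 3))
  · simpa using pCond_tOrbit hfix hs 3 ![1, 0, 0, 1] (by decide)
  · simpa using pCond_tOrbit hfix hs 1 ![0, 1, 1, 0] (by decide)
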